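/- arXiv:1807.09376 — 2 statements merged into one kernel-verified Lean document; each statement's English description precedes it below -/
import Mathlib

section
/- For every positive integer s, IR(sP_3, 2K_2) = 3s + 3. -/
/-
In `(s+1)P_3`, if two components contain a blue edge, those two edges form a blue induced `2K_2`;
otherwise deleting the only component that may contain a blue edge leaves a red induced `sP_3`.

Conversely, colouring blue the edges that meet a clique `X` of `F` creates no blue induced `2K_2`,
so `F - X` contains an induced `sP_3`, which also misses every set `T` of at most two vertices
whose neighbours all lie in `T ∪ X`. Let `AB, CD` be an induced `2K_2` of `F` and take
`X = {C, D}`. Either the copy misses a third vertex, or it covers `F - {C, D}`; then the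
`P_3`-component `{A, B, x}` through `AB` has all outside neighbours in `{C, D}`, and the pair
`X = {x, z}`, `T = {A, B}` for a neighbour `z ∈ {C, D}` of `x`, or else `X = {A, B}`, `T = {x}`,
gives a copy missing `A`, `B` and `x`. Either way `F` has at least `3s + 3` vertices.
-/

open SimpleGraph

/-- The disjoint union of `s` copies of the graph `G`. -/
def SimpleGraph.Copies {β : Type*} (s : ℕ) (G : SimpleGraph β) :
    SimpleGraph (Fin s × β) where
  Adj x y := x.1 = y.1 ∧ G.Adj x.2 y.2
  symm := ⟨fun x y h => ⟨h.1.symm, G.symm.symm _ _ h.2⟩⟩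
  loopless := ⟨fun x h => G.loopless.irrefl x.2 h.2⟩

/-- `F` strongly arrows `(G, H)`: every red-blue (`true`/`false`) colouring of the
edges of `F` yields a red induced copy of `G` or a blue induced copy of `H`. -/
def StronglyArrows {α β γ : Type*}
    (F : SimpleGraph α) (G : SimpleGraph β) (H : SimpleGraph γ) : Prop :=
  ∀ c : Sym2 α → Bool,
    (∃ f : G ↪g F, ∀ a b : β, G.Adj a b → c s(f a, f b) = true) ∨
    (∃ f : H ↪g F, ∀ a b : γ, H.Adj a b → c s(f a, f b) = false)

/-- The induced Ramsey number `IR(G, H)`. -/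
noncomputable def IR {β γ : Type*} (G : SimpleGraph β) (H : SimpleGraph γ) : ℕ :=
  sInf {n : ℕ | ∃ F : SimpleGraph (Fin n), StronglyArrows F G H}

/-- The single-edge graph `K_2`. -/
def K2 : SimpleGraph (Fin 2) := ⊤

/-- Two disjoint edges `2K_2`. -/
def twoK2 : SimpleGraph (Fin 2 × Fin 2) := SimpleGraph.Copies 2 K2

theorem Fintype.card_add_card_le_of_injective {β V : Type*} [Fintype β] [Fintype V]
    {g : β → V} (hg : g.Injective) {Y : Finset V} (hY : ∀ b, g b ∉ Y) :
    Fintype.card β + Y.card ≤ Fintype.card V := by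
  simpa using Fintype.card_le_of_injective (Sum.elim g ((↑) : Y → V))
    (hg.sumElim Subtype.val_injective fun b y h => hY b (h ▸ y.2))

namespace SimpleGraph

variable {V β γ : Type*} {F : SimpleGraph V}

def Embedding.ofAdj {G : SimpleGraph β} {a b : β} (h : G.Adj a b) : K2 ↪g G where
  toFun := ![a, b]
  inj' := by
    intro x y hxy
    fin_cases x <;> fin_cases y <;> simp_all [h.ne, h.ne.symm]
  map_rel_iff' := by
    intro x y
    change G.Adj (![a, b] x) (![a, b] y) ↔ K2.Adj x y
    fin_cases x <;> fin_cases y <;> simp [K2, h, h.symm]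

def Embedding.copies {m n : ℕ} {H : SimpleGraph γ} {G : SimpleGraph β}
    (κ : Fin m ↪ Fin n) (φ : Fin m → (H ↪g G)) : Copies m H ↪g Copies n G where
  toFun p := (κ p.1, φ p.1 p.2)
  inj' := by
    rintro ⟨i, x⟩ ⟨j, y⟩ h
    obtain ⟨hij, hxy⟩ := Prod.mk.inj h
    obtain rfl := κ.injective hij
    exact Prod.ext rfl ((φ i).injective hxy)
  map_rel_iff' := by
    rintro ⟨i, x⟩ ⟨j, y⟩
    constructor
    · rintro ⟨hij, hxy⟩
      obtain rfl := κ.injective hij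
      exact ⟨rfl, (φ i).map_adj_iff.mp hxy⟩
    · rintro ⟨rfl, hxy⟩
      exact ⟨rfl, (φ i).map_adj_iff.mpr hxy⟩

theorem Copies.exists_adj {s : ℕ} {G : SimpleGraph β} (hG : ∀ b, ∃ b', G.Adj b b')
    (p : Fin s × β) : ∃ q, (Copies s G).Adj p q :=
  let ⟨b', hb'⟩ := hG p.2
  ⟨(p.1, b'), rfl, hb'⟩

theorem pathGraph_three_exists_third {k l : Fin 3} (hkl : k ≠ l) :
    ∃ m, m ≠ k ∧ m ≠ l ∧ ∀ r, r = k ∨ r = l ∨ r = m := by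
  revert k l; decide

theorem twoK2_adj_iff {p q : Fin 2 × Fin 2} : twoK2.Adj p q ↔ p.1 = q.1 ∧ p.2 ≠ q.2 := Iff.rfl

theorem forall_twoK2_adj_iff {P : Sym2 (Fin 2 × Fin 2) → Prop} :
    (∀ p q, twoK2.Adj p q → P s(p, q)) ↔ ∀ e, P s((e, 0), (e, 1)) := by
  refine ⟨fun h e => h _ _ (twoK2_adj_iff.mpr ⟨rfl, by simp⟩), ?_⟩
  rintro h ⟨e, x⟩ ⟨e', y⟩ ⟨rfl, hxy⟩
  fin_cases x <;> fin_cases y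
  · exact absurd rfl hxy
  · exact h e
  · rw [Sym2.eq_swap]; exact h e
  · exact absurd rfl hxy

theorem twoK2_embedding_ne_and_not_adj (f : twoK2 ↪g F) (x y : Fin 2) :
    f (0, x) ≠ f (1, y) ∧ ¬ F.Adj (f (0, x)) (f (1, y)) := by
  refine ⟨fun h => absurd (congrArg Prod.fst (f.injective h)) (by simp), fun h => ?_⟩
  exact absurd (twoK2_adj_iff.mp (f.map_adj_iff.mp h)).1 (by simp)

/-- A set `T` that `F` leaves only towards `X` is a union of components of `F - X`; if it is
smaller than the connected graph `G`, no copy of `G` in `F - X` can meet it. -/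
theorem Copies.apply_notMem_of_closed [Fintype β] {G : SimpleGraph β} (hG : G.Connected)
    {s : ℕ} (g : Copies s G ↪g F) {X : Set V} (hX : ∀ p, g p ∉ X) {T : Finset V}
    (hT : ∀ t ∈ T, ∀ u, F.Adj t u → u ∈ T ∨ u ∈ X) (hcard : T.card < Fintype.card β)
    (p : Fin s × β) : g p ∉ T := by
  obtain ⟨i, x⟩ := p
  intro hx
  have hwalk : ∀ {y y'} (w : G.Walk y y'), g (i, y) ∈ T → g (i, y') ∈ T := by
    intro y y' w
    induction w with
    | nil => exact id
    | @cons _ z _ hadj _ ih =>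
      exact fun hy => ih ((hT _ hy (g (i, z)) (g.map_adj_iff.mpr ⟨rfl, hadj⟩)).resolve_right (hX _))
  have hsub : ∀ y ∈ (Finset.univ : Finset β), g (i, y) ∈ T := fun y _ =>
    (hG.preconnected x y).elim fun w => hwalk w hx
  have := Finset.card_le_card_of_injOn _ hsub fun y _ y' _ h => congrArg Prod.snd (g.injective h)
  simp only [Finset.card_univ] at this
  omega

/-- `x` is the third vertex of the `P_3`-component of the copy through `ab`. -/
theorem Copies.exists_closed_triple {s : ℕ} (g : Copies s (pathGraph 3) ↪g F) {Y : Set V}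
    (hspan : ∀ v ∉ Y, ∃ p, g p = v) {a b : V} (hab : F.Adj a b)
    (ha : a ∉ Y) (hb : b ∉ Y) :
    ∃ x, x ≠ a ∧ x ≠ b ∧
      ∀ v ∈ ({a, b, x} : Set V), ∀ u, F.Adj v u → u ∈ Y ∨ u ∈ ({a, b, x} : Set V) := by
  obtain ⟨⟨i, k⟩, rfl⟩ := hspan a ha
  obtain ⟨⟨j, l⟩, rfl⟩ := hspan b hb
  obtain ⟨rfl, hkl⟩ := g.map_adj_iff.mp hab
  obtain ⟨m, hmk, hml, hall⟩ := pathGraph_three_exists_third hkl.ne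
  have hcomp : ∀ r, g (i, r) ∈ ({g (i, k), g (i, l), g (i, m)} : Set V) := fun r => by
    rcases hall r with rfl | rfl | rfl <;> simp
  refine ⟨g (i, m), fun h => hmk ?_, fun h => hml ?_, ?_⟩
  · simpa using g.injective h
  · simpa using g.injective h
  rintro v hv u hvu
  obtain ⟨r, rfl⟩ : ∃ r, g (i, r) = v := by rcases hv with rfl | rfl | rfl <;> exact ⟨_, rfl⟩
  by_cases hu : u ∈ Y
  · exact .inl hu
  obtain ⟨⟨j, r'⟩, rfl⟩ := hspan u hu
  obtain ⟨rfl, -⟩ := g.map_adj_iff.mp hvu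
  exact .inr (hcomp r')

end SimpleGraph

section StronglyArrows

variable {V β γ : Type*} {F : SimpleGraph V} {G : SimpleGraph β} {H : SimpleGraph γ}

theorem StronglyArrows.of_iso {W : Type*} {F' : SimpleGraph W} (φ : F ≃g F')
    (hF : StronglyArrows F G H) : StronglyArrows F' G H := by
  intro c
  rcases hF (c ∘ Sym2.map φ) with ⟨f, hf⟩ | ⟨f, hf⟩
  · exact .inl ⟨φ.toEmbedding.comp f, hf⟩
  · exact .inr ⟨φ.toEmbedding.comp f, hf⟩

theorem stronglyArrows_copies_succ (G : SimpleGraph β) (s : ℕ) :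
    StronglyArrows (Copies (s + 1) G) (Copies s G) twoK2 := by
  intro c
  let IsBlue : Fin (s + 1) → Prop := fun t => ∃ x y, G.Adj x y ∧ c s((t, x), (t, y)) = false
  by_cases h : ∃ p, ∀ t ≠ p, ¬ IsBlue t
  · obtain ⟨p, hp⟩ := h
    refine .inl ⟨Embedding.copies p.succAboveEmb fun _ => Embedding.refl, ?_⟩
    rintro ⟨i, x⟩ ⟨j, y⟩ ⟨rfl, hxy⟩
    by_contra hc
    exact hp _ (p.succAbove_ne i) ⟨x, y, hxy, Bool.eq_false_iff.mpr hc⟩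
  · push Not at h
    obtain ⟨i, -, x, y, hxy, hi⟩ := h 0
    obtain ⟨j, hji, x', y', hxy', hj⟩ := h i
    have hκ : Function.Injective ![i, j] := by
      intro a b hab
      fin_cases a <;> fin_cases b <;> simp_all [hji.symm]
    refine .inr ⟨Embedding.copies ⟨_, hκ⟩ ![Embedding.ofAdj hxy, Embedding.ofAdj hxy'], ?_⟩
    refine forall_twoK2_adj_iff (P := fun e => c (e.map _) = false) |>.mpr fun e => ?_
    fin_cases e
    exacts [hi, hj]

theorem exists_stronglyArrows_copies_pathGraph_three (s : ℕ) :
    ∃ F : SimpleGraph (Fin (3 * s + 3)), StronglyArrows F (Copies s (pathGraph 3)) twoK2 := by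
  let e : Fin (s + 1) × Fin 3 ≃ Fin (3 * s + 3) := finProdFinEquiv.trans (finCongr (by ring))
  exact ⟨_, (stronglyArrows_copies_succ _ s).of_iso (Iso.map e _)⟩

theorem StronglyArrows.nonempty_embedding_right (hF : StronglyArrows F G H) {a b : β}
    (hab : G.Adj a b) : Nonempty (H ↪g F) := by
  rcases hF fun _ => false with ⟨f, hf⟩ | ⟨f, -⟩
  · exact absurd (hf a b hab) Bool.false_ne_true
  · exact ⟨f⟩

/-- Colouring blue exactly the edges meeting a clique `X` leaves no blue induced `2K_2`, since
an edge of `F` joins the two blue edges at their points in `X`. -/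
theorem StronglyArrows.exists_embedding_avoiding_clique (hF : StronglyArrows F G twoK2)
    (hG : ∀ b, ∃ b', G.Adj b b') {X : Set V} (hX : F.IsClique X) :
    ∃ f : G ↪g F, ∀ b, f b ∉ X := by
  classical
  rcases hF fun e => decide (∀ x ∈ X, x ∉ e) with ⟨f, hf⟩ | ⟨f, hf⟩
  · refine ⟨f, fun b hb => ?_⟩
    obtain ⟨b', hbb'⟩ := hG b
    exact of_decide_eq_true (hf b b' hbb') _ hb (Sym2.mem_mk_left _ _)
  · exfalso
    have hmeet : ∀ e, ∃ x : Fin 2, f (e, x) ∈ X := by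
      intro e
      have := hf (e, 0) (e, 1) (twoK2_adj_iff.mpr ⟨rfl, by simp⟩)
      simp only [decide_eq_false_iff_not, not_forall, not_not, Sym2.mem_iff] at this
      obtain ⟨v, hv, rfl | rfl⟩ := this
      exacts [⟨0, hv⟩, ⟨1, hv⟩]
    obtain ⟨x, hx⟩ := hmeet 0
    obtain ⟨y, hy⟩ := hmeet 1
    obtain ⟨hne, hnadj⟩ := twoK2_embedding_ne_and_not_adj f x y
    exact hnadj (hX hx hy hne)

theorem StronglyArrows.exists_embedding_avoiding_closed [Fintype β] [Nontrivial β]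
    {G : SimpleGraph β} {s : ℕ} (hF : StronglyArrows F (Copies s G) twoK2) (hG : G.Connected)
    {X : Set V} (hX : F.IsClique X) {T : Finset V}
    (hT : ∀ t ∈ T, ∀ u, F.Adj t u → u ∈ T ∨ u ∈ X) (hTcard : T.card < Fintype.card β) :
    ∃ g : Copies s G ↪g F, ∀ p, g p ∉ X ∧ g p ∉ T := by
  obtain ⟨g, hg⟩ :=
    hF.exists_embedding_avoiding_clique (Copies.exists_adj hG.preconnected.exists_adj_of_nontrivial) hX
  exact ⟨g, fun p => ⟨hg p, Copies.apply_notMem_of_closed hG g hg hT hTcard p⟩⟩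

/-- If `x` has a neighbour `z ∈ Y`, avoid the clique `{x, z}` and the closed set `{a, b}`;
otherwise avoid the clique `{a, b}` and the closed set `{x}`. -/
theorem StronglyArrows.exists_embedding_avoiding_triple [DecidableEq V] {s : ℕ}
    (hF : StronglyArrows F (Copies s (pathGraph 3)) twoK2) {a b x : V} {Y : Set V}
    (hab : F.Adj a b)
    (hclosed : ∀ v ∈ ({a, b, x} : Set V), ∀ u, F.Adj v u → u ∈ Y ∨ u ∈ ({a, b, x} : Set V))
    (haY : ∀ u ∈ Y, ¬ F.Adj a u) (hbY : ∀ u ∈ Y, ¬ F.Adj b u) :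
    ∃ g : Copies s (pathGraph 3) ↪g F, ∀ p, g p ∉ ({a, b, x} : Finset V) := by
  by_cases hx : ∃ z ∈ Y, F.Adj x z
  · obtain ⟨z, hzY, hxz⟩ := hx
    have hT : ∀ t ∈ ({a, b} : Finset V), ∀ u, F.Adj t u →
        u ∈ ({a, b} : Finset V) ∨ u ∈ ({x, z} : Set V) := by
      intro t ht u htu
      simp only [Finset.mem_insert, Finset.mem_singleton] at ht
      rcases hclosed t (by rcases ht with rfl | rfl <;> simp) u htu with hu | hu
      · rcases ht with rfl | rfl
        exacts [absurd htu (haY u hu), absurd htu (hbY u hu)]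
      · simp only [Set.mem_insert_iff, Set.mem_singleton_iff] at hu
        simp only [Finset.mem_insert, Finset.mem_singleton, Set.mem_insert_iff,
          Set.mem_singleton_iff]
        tauto
    obtain ⟨g, hg⟩ := hF.exists_embedding_avoiding_closed (pathGraph_connected 2)
      (isClique_pair.mpr fun _ => hxz) hT (Finset.card_le_two.trans_lt (by simp))
    refine ⟨g, fun p hp => ?_⟩
    simp only [Finset.mem_insert, Finset.mem_singleton] at hp
    have := hg p
    rcases hp with h | h | h <;> simp [h] at this
  · push Not at hx
    have hT : ∀ t ∈ ({x} : Finset V), ∀ u, F.Adj t u →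
        u ∈ ({x} : Finset V) ∨ u ∈ ({a, b} : Set V) := by
      intro t ht u htu
      rw [Finset.mem_singleton] at ht
      subst ht
      rcases hclosed t (by simp) u htu with hu | hu
      · exact absurd htu (hx u hu)
      · simp only [Set.mem_insert_iff, Set.mem_singleton_iff] at hu
        simp only [Finset.mem_singleton, Set.mem_insert_iff, Set.mem_singleton_iff]
        tauto
    obtain ⟨g, hg⟩ := hF.exists_embedding_avoiding_closed (pathGraph_connected 2)
      (isClique_pair.mpr fun _ => hab) hT (by simp)
    refine ⟨g, fun p hp => ?_⟩
    simp only [Finset.mem_insert, Finset.mem_singleton] at hp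
    have := hg p
    rcases hp with h | h | h <;> simp [h] at this

theorem StronglyArrows.exists_embedding_avoiding_three [DecidableEq V] {s : ℕ} (hs : 1 ≤ s)
    (hF : StronglyArrows F (Copies s (pathGraph 3)) twoK2) :
    ∃ (g : Copies s (pathGraph 3) ↪g F) (Y : Finset V), Y.card = 3 ∧ ∀ p, g p ∉ Y := by
  obtain ⟨f⟩ := hF.nonempty_embedding_right (a := (⟨0, hs⟩, 0)) (b := (⟨0, hs⟩, 1))
    ⟨rfl, by simp [pathGraph_adj]⟩
  have hedge : ∀ e, F.Adj (f (e, 0)) (f (e, 1)) := fun e =>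
    f.map_adj_iff.mpr (twoK2_adj_iff.mpr ⟨rfl, by simp⟩)
  have hsep := twoK2_embedding_ne_and_not_adj f
  have hP3adj := (pathGraph_connected 2).preconnected.exists_adj_of_nontrivial
  obtain ⟨g, hg⟩ := hF.exists_embedding_avoiding_clique (Copies.exists_adj hP3adj)
    (isClique_pair.mpr fun _ => hedge 1)
  by_cases hspan : ∀ v ∉ ({f (1, 0), f (1, 1)} : Set V), ∃ p, g p = v
  · obtain ⟨x, hxa, hxb, hclosed⟩ := Copies.exists_closed_triple g hspan (hedge 0)
      (by simp [(hsep 0 0).1, (hsep 0 1).1]) (by simp [(hsep 1 0).1, (hsep 1 1).1])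
    obtain ⟨g', hg'⟩ := hF.exists_embedding_avoiding_triple (hedge 0) hclosed
      (by simp [(hsep 0 0).2, (hsep 0 1).2]) (by simp [(hsep 1 0).2, (hsep 1 1).2])
    refine ⟨g', _, ?_, hg'⟩
    rw [Finset.card_insert_of_notMem (by simp [(hedge 0).ne, hxa.symm]), Finset.card_pair hxb.symm]
  · push Not at hspan
    obtain ⟨v, hv, hvg⟩ := hspan
    simp only [Set.mem_insert_iff, Set.mem_singleton_iff, not_or] at hv
    refine ⟨g, {v, f (1, 0), f (1, 1)}, ?_, fun p hp => ?_⟩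
    · rw [Finset.card_insert_of_notMem (by simp [hv.1, hv.2]), Finset.card_pair (hedge 1).ne]
    · simp only [Finset.mem_insert, Finset.mem_singleton] at hp
      rcases hp with h | h
      · exact hvg p h
      · exact hg p (by simpa using h)

theorem StronglyArrows.card_copies_pathGraph_three_le [Fintype V] {s : ℕ} (hs : 1 ≤ s)
    (hF : StronglyArrows F (Copies s (pathGraph 3)) twoK2) : 3 * s + 3 ≤ Fintype.card V := by
  classical
  obtain ⟨g, Y, hY, hgY⟩ := hF.exists_embedding_avoiding_three hs
  have := Fintype.card_add_card_le_of_injective g.injective hgY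
  rwa [hY, Fintype.card_prod, Fintype.card_fin, Fintype.card_fin, mul_comm] at this

end StronglyArrows

theorem stmt10 (s : ℕ) (hs : 1 ≤ s) :
    IR (SimpleGraph.Copies s (SimpleGraph.pathGraph 3)) twoK2 = 3 * s + 3 := by
  obtain ⟨F, hF⟩ := exists_stronglyArrows_copies_pathGraph_three s
  refine le_antisymm (Nat.sInf_le ⟨F, hF⟩) (le_csInf ⟨_, F, hF⟩ ?_)
  rintro n ⟨F', hF'⟩
  simpa using hF'.card_copies_pathGraph_three_le hs
end

section
/- Let G and H be connected graphs, t a positive integer, and for i = 1,…,t let f_i = IR(G, iH). Suppose f_t < min over all partitions t = t_1 + … + t_m with m ≥ 2 of the sum f_{t_1} + … + f_{t_m}. Then every graph F of order f_t with F →ind (G, tH) is connected. -/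
open SimpleGraph

/-!
Suppose `F` has `f_t` vertices, arrows `(G, tH)` and is disconnected; let `S` be a component.
Take `p < t` maximal with `F[S] → (G, pH)` (`p = t` would give `f_t ≤ |S|`), and colour `F[S]`
with neither a red `G` nor a blue `(p+1)H`. If `F[Sᶜ]` had a colouring with neither a red `G` nor
a blue `(t-p)H`, the union of the two colourings would contradict `F → (G, tH)`, because a
connected red `G`, and each connected blue copy of `H`, lies inside `S` or inside `Sᶜ`. So
`F[Sᶜ] → (G, (t-p)H)`, which forces `p ≥ 1`, and `f_p + f_{t-p} ≤ |S| + |Sᶜ| = f_t` contradicts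
the hypothesis on the partition `t = p + (t - p)`.
-/

namespace SimpleGraph

variable {α β γ : Type*}

def Copies.incl {s : ℕ} (H : SimpleGraph γ) (j : Fin s) : H →g Copies s H where
  toFun x := (j, x)
  map_rel' h := ⟨rfl, h⟩

def Copies.embedding {m n : ℕ} (H : SimpleGraph γ) (e : Fin m ↪ Fin n) :
    Copies m H ↪g Copies n H where
  toEmbedding := e.prodMap (Function.Embedding.refl γ)
  map_rel_iff' {x y} := by
    change e x.1 = e y.1 ∧ H.Adj x.2 y.2 ↔ x.1 = y.1 ∧ H.Adj x.2 y.2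
    rw [e.injective.eq_iff]

theorem Preconnected.forall_mem_supp_or_forall_mem_compl {X : SimpleGraph β}
    {F : SimpleGraph α} (hX : X.Preconnected) (g : X →g F) (K : F.ConnectedComponent) :
    (∀ x, g x ∈ K.supp) ∨ ∀ x, g x ∈ K.suppᶜ := by
  by_cases h : ∀ x, g x ∈ K.supp
  · exact .inl h
  · obtain ⟨x₀, hx₀⟩ := not_forall.1 h
    refine .inr fun x hx => hx₀ ?_
    rw [ConnectedComponent.mem_supp_iff] at hx ⊢
    rw [← hx]
    exact ConnectedComponent.sound ((hX x₀ x).map g)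

end SimpleGraph

theorem Sym2.exists_comp_map_val_eq {α γ : Type*} [Nonempty γ] (S : Set α)
    (c₁ : Sym2 S → γ) (c₂ : Sym2 ↥Sᶜ → γ) :
    ∃ c : Sym2 α → γ, c ∘ Sym2.map (↑) = c₁ ∧ c ∘ Sym2.map (↑) = c₂ := by
  have disjoint : ∀ (e₁ : Sym2 S) (e₂ : Sym2 ↥Sᶜ), e₁.map Subtype.val ≠ e₂.map Subtype.val := by
    intro e₁ e₂ h
    induction e₂ using Sym2.ind with | h x y
    have hx : (x : α) ∈ e₁.map Subtype.val := h ▸ Sym2.mem_map.2 ⟨x, Sym2.mem_mk_left x y, rfl⟩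
    obtain ⟨z, -, hz⟩ := Sym2.mem_map.1 hx
    exact x.2 (hz ▸ z.2)
  have inj₁ := Sym2.map.injective (Subtype.val_injective (p := (· ∈ S)))
  have inj₂ := Sym2.map.injective (Subtype.val_injective (p := (· ∈ Sᶜ)))
  refine ⟨Function.extend (Sym2.map (↑)) c₁
    (Function.extend (Sym2.map (↑)) c₂ fun _ => Classical.arbitrary γ), ?_, ?_⟩
  · funext e
    exact inj₁.extend_apply _ _ e
  · funext e
    rw [Function.comp_apply, Function.extend_apply' _ _ _ fun ⟨e₁, he⟩ => disjoint e₁ e he,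
      inj₂.extend_apply]

theorem Nat.exists_lt_and_not_succ {P : ℕ → Prop} {t : ℕ} (h0 : P 0) (ht : ¬P t) :
    ∃ p < t, P p ∧ ¬P (p + 1) := by
  classical
  have hp : P (Nat.findGreatest P t) := Nat.findGreatest_spec (Nat.zero_le t) h0
  have hpt : Nat.findGreatest P t < t :=
    (Nat.findGreatest_le t).lt_of_ne fun h => ht (h ▸ hp)
  exact ⟨_, hpt, hp, Nat.findGreatest_is_greatest (lt_add_one _) hpt⟩

section Arrows

variable {α α' β γ : Type*} {F : SimpleGraph α} {G : SimpleGraph β} {H : SimpleGraph γ}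

def HasMonoCopy (F : SimpleGraph α) (G : SimpleGraph β) (c : Sym2 α → Bool) (b : Bool) : Prop :=
  ∃ f : G ↪g F, ∀ x y, G.Adj x y → c s(f x, f y) = b

theorem stronglyArrows_iff :
    StronglyArrows F G H ↔ ∀ c, HasMonoCopy F G c true ∨ HasMonoCopy F H c false :=
  Iff.rfl

theorem HasMonoCopy.of_embedding_left {F' : SimpleGraph α'} (e : F ↪g F') {c : Sym2 α' → Bool}
    {b : Bool} (h : HasMonoCopy F G (c ∘ Sym2.map e) b) : HasMonoCopy F' G c b :=
  let ⟨f, hf⟩ := h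
  ⟨e.comp f, hf⟩

theorem HasMonoCopy.of_embedding_right {G' : SimpleGraph α'} (e : G' ↪g G) {c : Sym2 α → Bool}
    {b : Bool} (h : HasMonoCopy F G c b) : HasMonoCopy F G' c b :=
  let ⟨f, hf⟩ := h
  ⟨f.comp e, fun _ _ hxy => hf _ _ (e.map_rel_iff.2 hxy)⟩

theorem hasMonoCopy_induce_of_forall_mem {S : Set α} {f : G ↪g F} {c : Sym2 α → Bool} {b : Bool}
    (hf : ∀ x y, G.Adj x y → c s(f x, f y) = b) (hS : ∀ x, f x ∈ S) :
    HasMonoCopy (F.induce S) G (c ∘ Sym2.map Subtype.val) b :=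
  ⟨⟨⟨fun x => ⟨f x, hS x⟩, fun _ _ h => f.injective (congrArg Subtype.val h)⟩, f.map_rel_iff⟩,
    hf⟩

theorem StronglyArrows.of_embedding_left {F' : SimpleGraph α'} (e : F ↪g F')
    (h : StronglyArrows F G H) : StronglyArrows F' G H := fun c =>
  (h (c ∘ Sym2.map e)).imp (HasMonoCopy.of_embedding_left e) (HasMonoCopy.of_embedding_left e)

theorem StronglyArrows.of_embedding_right {H' : SimpleGraph α'} (e : H' ↪g H)
    (h : StronglyArrows F G H) : StronglyArrows F G H' := fun c =>
  (h c).imp id (HasMonoCopy.of_embedding_right e)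

theorem StronglyArrows.of_isEmpty [IsEmpty γ] : StronglyArrows F G H := fun _ =>
  .inr ⟨⟨Function.Embedding.ofIsEmpty, fun {x} => isEmptyElim x⟩, fun x => isEmptyElim x⟩

theorem StronglyArrows.nonempty [Nonempty β] (h : StronglyArrows F G H) [Nonempty γ] :
    Nonempty α := by
  rcases h fun _ => true with ⟨f, -⟩ | ⟨f, -⟩
  · exact ⟨f (Classical.arbitrary β)⟩
  · exact ⟨f (Classical.arbitrary γ)⟩

theorem IR_le_card [Finite α] (h : StronglyArrows F G H) : IR G H ≤ Nat.card α := by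
  have := Fintype.ofFinite α
  have hc : Fintype.card α = Nat.card α := Nat.card_eq_fintype_card.symm
  exact Nat.sInf_le ⟨F.overFin hc, h.of_embedding_left (F.overFinIso hc).toEmbedding⟩

theorem IR_le_ncard [Finite α] {S : Set α} (h : StronglyArrows (F.induce S) G H) :
    IR G H ≤ S.ncard :=
  (IR_le_card h).trans_eq (Nat.card_coe_set_eq S)

theorem StronglyArrows.copies_of_le {m n : ℕ} (h : StronglyArrows F G (Copies n H)) (hmn : m ≤ n) :
    StronglyArrows F G (Copies m H) :=
  h.of_embedding_right (Copies.embedding H (Fin.castLEEmb hmn))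

end Arrows

section Components

variable {α β γ : Type*} {F : SimpleGraph α} {G : SimpleGraph β} {H : SimpleGraph γ}

theorem hasMonoCopy_induce_copies_of_le_card {n m : ℕ} {S : Set α} {f : Copies n H ↪g F}
    {c : Sym2 α → Bool} {b : Bool} (hf : ∀ x y, (Copies n H).Adj x y → c s(f x, f y) = b)
    (A : Finset (Fin n)) (hA : ∀ j ∈ A, ∀ x, f (j, x) ∈ S) (hm : m ≤ A.card) :
    HasMonoCopy (F.induce S) (Copies m H) (c ∘ Sym2.map Subtype.val) b := by
  let e : Fin m ↪ Fin n := (Fin.castLEEmb hm).trans (A.orderEmbOfFin rfl).toEmbedding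
  have he : ∀ k, e k ∈ A := fun k => A.orderEmbOfFin_mem rfl _
  exact hasMonoCopy_induce_of_forall_mem (f := f.comp (Copies.embedding H e))
    (fun _ _ hxy => hf _ _ ((Copies.embedding H e).map_rel_iff.2 hxy)) fun x => hA _ (he x.1) x.2

theorem HasMonoCopy.induce_supp_or_compl (hG : G.Preconnected) {c : Sym2 α → Bool} {b : Bool}
    (h : HasMonoCopy F G c b) (K : F.ConnectedComponent) :
    HasMonoCopy (F.induce K.supp) G (c ∘ Sym2.map Subtype.val) b ∨
      HasMonoCopy (F.induce K.suppᶜ) G (c ∘ Sym2.map Subtype.val) b :=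
  let ⟨f, hf⟩ := h
  (hG.forall_mem_supp_or_forall_mem_compl f.toHom K).imp
    (hasMonoCopy_induce_of_forall_mem hf) (hasMonoCopy_induce_of_forall_mem hf)

theorem HasMonoCopy.induce_supp_or_compl_copies (hH : H.Preconnected) {p q : ℕ}
    {c : Sym2 α → Bool} {b : Bool} (h : HasMonoCopy F (Copies (p + q) H) c b)
    (K : F.ConnectedComponent) :
    HasMonoCopy (F.induce K.supp) (Copies (p + 1) H) (c ∘ Sym2.map Subtype.val) b ∨
      HasMonoCopy (F.induce K.suppᶜ) (Copies q H) (c ∘ Sym2.map Subtype.val) b := by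
  classical
  obtain ⟨f, hf⟩ := h
  have hcopy (j : Fin (p + q)) : (∀ x, f (j, x) ∈ K.supp) ∨ ∀ x, f (j, x) ∈ K.suppᶜ :=
    hH.forall_mem_supp_or_forall_mem_compl (f.toHom.comp (Copies.incl H j)) K
  let A := Finset.univ.filter fun j => ∀ x, f (j, x) ∈ K.supp
  let B := Finset.univ.filter fun j => ¬∀ x, f (j, x) ∈ K.supp
  have hcard : A.card + B.card = p + q := by
    rw [Finset.card_filter_add_card_filter_not, Finset.card_univ, Fintype.card_fin]
  by_cases hp : p + 1 ≤ A.card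
  · exact .inl <| hasMonoCopy_induce_copies_of_le_card hf A (by simp [A]) hp
  · refine .inr <| hasMonoCopy_induce_copies_of_le_card hf B (fun j hj => ?_) (by omega)
    exact (hcopy j).resolve_left (Finset.mem_filter.1 hj).2

theorem StronglyArrows.induce_compl_supp (hG : G.Preconnected) (hH : H.Preconnected) {p q : ℕ}
    (hF : StronglyArrows F G (Copies (p + q) H)) (K : F.ConnectedComponent)
    (hK : ¬StronglyArrows (F.induce K.supp) G (Copies (p + 1) H)) :
    StronglyArrows (F.induce K.suppᶜ) G (Copies q H) := by
  by_contra hKc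
  simp only [stronglyArrows_iff, not_forall, not_or] at hK hKc
  obtain ⟨c₁, hc₁G, hc₁H⟩ := hK
  obtain ⟨c₂, hc₂G, hc₂H⟩ := hKc
  obtain ⟨c, rfl, rfl⟩ := Sym2.exists_comp_map_val_eq K.supp c₁ c₂
  rcases stronglyArrows_iff.1 hF c with hred | hblue
  · exact (hred.induce_supp_or_compl hG K).elim hc₁G hc₂G
  · exact (hblue.induce_supp_or_compl_copies hH K).elim hc₁H hc₂H

end Components

theorem stmt18_general {β γ : Type*}
    (G : SimpleGraph β) (H : SimpleGraph γ) (hG : G.Connected) (hH : H.Connected)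
    (t : ℕ) (ht : 1 ≤ t)
    (hmin : ∀ L : List ℕ, 2 ≤ L.length → (∀ x ∈ L, 1 ≤ x) → L.sum = t →
      IR G (SimpleGraph.Copies t H) <
        (L.map fun i => IR G (SimpleGraph.Copies i H)).sum) :
    ∀ F : SimpleGraph (Fin (IR G (SimpleGraph.Copies t H))),
      StronglyArrows F G (SimpleGraph.Copies t H) → F.Connected := by
  classical
  intro F hF
  have := hG.nonempty
  have := hH.nonempty
  have : NeZero t := ⟨by omega⟩
  refine (connected_iff F).2 ⟨fun u v => by_contra fun huv => ?_, hF.nonempty⟩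
  set K := F.connectedComponentMk u
  have hu : u ∉ K.suppᶜ := fun h => h rfl
  have hv : v ∉ K.supp := fun hv => huv (ConnectedComponent.exact hv.symm)
  have hcard : K.supp.ncard + K.suppᶜ.ncard = IR G (Copies t H) := by
    rw [Set.ncard_add_ncard_compl, Nat.card_fin]
  have hK : K.supp.ncard < IR G (Copies t H) :=
    (Set.ncard_lt_card (Set.ne_univ_iff_exists_notMem _ |>.2 ⟨v, hv⟩)).trans_eq (Nat.card_fin _)
  have hKc : K.suppᶜ.ncard < IR G (Copies t H) :=
    (Set.ncard_lt_card (Set.ne_univ_iff_exists_notMem _ |>.2 ⟨u, hu⟩)).trans_eq (Nat.card_fin _)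
  obtain ⟨p, hpt, hp, hp'⟩ := Nat.exists_lt_and_not_succ
    (P := fun i => StronglyArrows (F.induce K.supp) G (Copies i H)) StronglyArrows.of_isEmpty
    fun h => (IR_le_ncard h).not_gt hK
  have hq : StronglyArrows (F.induce K.suppᶜ) G (Copies (t - p) H) :=
    (hF.copies_of_le (by omega)).induce_compl_supp hG.preconnected hH.preconnected K hp'
  have hp0 : p ≠ 0 := by
    rintro rfl
    simpa using (IR_le_ncard hq).trans_lt hKc
  refine lt_irrefl (IR G (Copies t H)) ?_
  calc IR G (Copies t H) < IR G (Copies p H) + IR G (Copies (t - p) H) := by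
        simpa using hmin [p, t - p] (by simp) (by simp; omega) (by simp; omega)
    _ ≤ K.supp.ncard + K.suppᶜ.ncard := add_le_add (IR_le_ncard hp) (IR_le_ncard hq)
    _ = IR G (Copies t H) := hcard

theorem stmt18 {β γ : Type*} [Fintype β] [Fintype γ]
    (G : SimpleGraph β) (H : SimpleGraph γ) (hG : G.Connected) (hH : H.Connected)
    (t : ℕ) (ht : 1 ≤ t)
    (hmin : ∀ L : List ℕ, 2 ≤ L.length → (∀ x ∈ L, 1 ≤ x) → L.sum = t →
      IR G (SimpleGraph.Copies t H) <
        (L.map fun i => IR G (SimpleGraph.Copies i H)).sum) :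
    ∀ F : SimpleGraph (Fin (IR G (SimpleGraph.Copies t H))),
      StronglyArrows F G (SimpleGraph.Copies t H) → F.Connected :=
  stmt18_general G H hG hH t ht hmin
end
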